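/- arXiv:2007.14112 — 3 statements merged into one kernel-verified Lean document; each statement's English description precedes it below -/
import Mathlib

section
/- Let X be a complementably homogeneous Banach space and let 𝒥 be a subset of B(X) that is closed under multiplication from the left and from the right by arbitrary operators in B(X). If 𝒥 is a proper subset of B(X), then 𝒥 ⊆ 𝒮_X(X). -/
noncomputable section

open scoped ENNReal NNReal

/-- The space `ℓ_p(ι)` of `p`-summable real families indexed by `ι`, as a type.
For `p = ∞` this is the space of bounded families with the supremum norm. -/
abbrev ellp (ι : Type*) (p : ℝ≥0∞) : Type _ := lp (fun _ : ι => ℝ) p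

/-- The standard unit vector `e_α` of `ℓ_p(ι)`. -/
def stdVec (ι : Type*) (p : ℝ≥0∞) (α : ι) : ellp ι p :=
  letI := Classical.decEq ι
  lp.single p α 1

/-- `c₀(ι)`, realised as the submodule of `ℓ∞(ι)` consisting of those families `f` such
that `{i | ε ≤ |f i|}` is finite for every `ε > 0`; it carries the supremum norm. -/
def c0Submodule (ι : Type*) : Submodule ℝ (ellp ι ∞) where
  carrier := {f | ∀ ε : ℝ, 0 < ε → {i : ι | ε ≤ |f i|}.Finite}
  zero_mem' := by
    intro ε hε
    have h : {i : ι | ε ≤ |(0 : ellp ι ∞) i|} = ∅ := by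
      ext i
      simp [lp.coeFn_zero, not_le.mpr hε]
    rw [h]
    exact Set.finite_empty
  add_mem' := by
    intro f g hf hg ε hε
    have h2 : 0 < ε / 2 := by linarith
    refine ((hf _ h2).union (hg _ h2)).subset ?_
    intro i hi
    simp only [Set.mem_setOf_eq, lp.coeFn_add, Pi.add_apply] at hi
    by_contra hcon
    simp only [Set.mem_union, Set.mem_setOf_eq, not_or, not_le] at hcon
    have habs : |f i + g i| ≤ |f i| + |g i| := abs_add_le _ _
    linarith [hcon.1, hcon.2]
  smul_mem' := by
    intro c f hf ε hε
    rcases eq_or_ne c 0 with rfl | hc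
    · have h : {i : ι | ε ≤ |((0 : ℝ) • f) i|} = ∅ := by
        ext i
        simp [zero_smul, not_le.mpr hε]
      rw [h]
      exact Set.finite_empty
    · have hcpos : 0 < |c| := abs_pos.2 hc
      refine (hf (ε / |c|) (by positivity)).subset ?_
      intro i hi
      simp only [Set.mem_setOf_eq, lp.coeFn_smul, Pi.smul_apply, smul_eq_mul, abs_mul] at hi
      simp only [Set.mem_setOf_eq]
      rw [div_le_iff₀ hcpos]
      linarith [hi, mul_comm (|c|) (|f i|)]

/-- The Banach space `c₀(ι)` with the supremum norm. -/
abbrev c0Space (ι : Type*) : Type _ := ↥(c0Submodule ι)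

/-- `ℓ∞^c(ι)`: the submodule of `ℓ∞(ι)` of countably supported bounded families,
with the supremum norm. -/
def lInftyCSubmodule (ι : Type*) : Submodule ℝ (ellp ι ∞) where
  carrier := {f | {i : ι | f i ≠ 0}.Countable}
  zero_mem' := by
    have h : {i : ι | (0 : ellp ι ∞) i ≠ 0} = ∅ := by
      ext i
      simp [lp.coeFn_zero]
    rw [Set.mem_setOf_eq, h]
    exact Set.countable_empty
  add_mem' := by
    intro f g hf hg
    refine (hf.union hg).mono ?_
    intro i hi
    simp only [Set.mem_setOf_eq, lp.coeFn_add, Pi.add_apply] at hi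
    by_contra hcon
    simp only [Set.mem_union, Set.mem_setOf_eq, not_or, not_not] at hcon
    rw [hcon.1, hcon.2, add_zero] at hi
    exact hi rfl
  smul_mem' := by
    intro c f hf
    refine hf.mono ?_
    intro i hi
    simp only [Set.mem_setOf_eq, lp.coeFn_smul, Pi.smul_apply, smul_eq_mul] at hi
    simp only [Set.mem_setOf_eq]
    intro h
    rw [h, mul_zero] at hi
    exact hi rfl

/-- The Banach space `ℓ∞^c(ι)` with the supremum norm. -/
abbrev lInftyCSpace (ι : Type*) : Type _ := ↥(lInftyCSubmodule ι)

lemma stdVec_mem_c0 (ι : Type*) (α : ι) : stdVec ι ∞ α ∈ c0Submodule ι := by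
  letI := Classical.decEq ι
  intro ε hε
  refine (Set.finite_singleton α).subset ?_
  intro i hi
  simp only [Set.mem_setOf_eq] at hi
  simp only [Set.mem_singleton_iff]
  by_contra h
  rw [stdVec] at hi
  rw [lp.single_apply_ne _ _ _ h] at hi
  simp at hi
  linarith

lemma stdVec_mem_lInftyC (ι : Type*) (α : ι) : stdVec ι ∞ α ∈ lInftyCSubmodule ι := by
  letI := Classical.decEq ι
  refine (Set.countable_singleton α).mono ?_
  intro i hi
  simp only [Set.mem_setOf_eq] at hi
  simp only [Set.mem_singleton_iff]
  by_contra h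
  rw [stdVec, lp.single_apply_ne _ _ _ h] at hi
  exact hi rfl

/-- The standard unit vector `e_α` of `c₀(ι)`. -/
def c0Vec (ι : Type*) (α : ι) : c0Space ι := ⟨stdVec ι ∞ α, stdVec_mem_c0 ι α⟩

/-- The standard unit vector `e_α` of `ℓ∞^c(ι)`. -/
def lInftyCVec (ι : Type*) (α : ι) : lInftyCSpace ι := ⟨stdVec ι ∞ α, stdVec_mem_lInftyC ι α⟩

/-- `T` preserves an isomorphic copy of `Z`: there is a closed subspace `W` of `X`,
isomorphic to `Z`, on which `T` is bounded below. -/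
def PreservesCopy {X : Type*} [NormedAddCommGroup X] [NormedSpace ℝ X]
    (Z : Type*) [NormedAddCommGroup Z] [NormedSpace ℝ Z] (T : X →L[ℝ] X) : Prop :=
  ∃ W : Submodule ℝ X, IsClosed (W : Set X) ∧ Nonempty (W ≃L[ℝ] Z) ∧
    ∃ γ : ℝ, 0 < γ ∧ ∀ w ∈ W, γ * ‖w‖ ≤ ‖T w‖

/-- The set `𝒮_Z(X)` of `Z`-singular operators on `X`. -/
def SZ (Z : Type*) [NormedAddCommGroup Z] [NormedSpace ℝ Z]
    (X : Type*) [NormedAddCommGroup X] [NormedSpace ℝ X] : Set (X →L[ℝ] X) :=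
  {T | ¬ PreservesCopy Z T}

/-- A sequence of operators SOT-converges to `T₀` if it converges pointwise in norm. -/
def SOTConvergesTo {X : Type*} [NormedAddCommGroup X] [NormedSpace ℝ X]
    (T : ℕ → X →L[ℝ] X) (T₀ : X →L[ℝ] X) : Prop :=
  ∀ x : X, Filter.Tendsto (fun n => T n x) Filter.atTop (nhds (T₀ x))

/-- An M-basis `(b_j, f_j)_{j ∈ J}` for a Banach space `X`: a biorthogonal system which is
fundamental (the span of the `b_j` is dense) and total (the span of the `f_j` is
weak*-dense in the dual). -/
structure IsMBasis {X : Type*} [NormedAddCommGroup X] [NormedSpace ℝ X] {J : Type*}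
    (b : J → X) (f : J → X →L[ℝ] ℝ) : Prop where
  biorth_self : ∀ j, f j (b j) = 1
  biorth_ne : ∀ i j, i ≠ j → f j (b i) = 0
  fundamental : Dense (Submodule.span ℝ (Set.range b) : Set X)
  total : Dense ((Submodule.span ℝ (Set.range fun j => (f j : WeakDual ℝ X)) :
    Submodule ℝ (WeakDual ℝ X)) : Set (WeakDual ℝ X))

/-- A family `(x_α)` in `X` is equivalent to the standard unit vector basis of `ℓ_q(ι)`
(with `q` a real exponent). -/
def IsLpBasisEquiv {X ι : Type*} [NormedAddCommGroup X] [NormedSpace ℝ X]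
    (x : ι → X) (q : ℝ) : Prop :=
  ∃ c C : ℝ, 0 < c ∧ 0 < C ∧ ∀ a : ι →₀ ℝ,
    c * (∑ α ∈ a.support, |a α| ^ q) ^ (1 / q) ≤ ‖a.sum fun α r => r • x α‖ ∧
      ‖a.sum fun α r => r • x α‖ ≤ C * (∑ α ∈ a.support, |a α| ^ q) ^ (1 / q)

/-- A family `(x_α)` in `X` is equivalent to the standard unit vector basis of `c₀(ι)`. -/
def IsC0BasisEquiv {X ι : Type*} [NormedAddCommGroup X] [NormedSpace ℝ X]
    (x : ι → X) : Prop :=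
  ∃ c C : ℝ, 0 < c ∧ 0 < C ∧ ∀ a : ι →₀ ℝ,
    c * ((a.support.sup fun α => ‖a α‖₊) : ℝ≥0) ≤ ‖a.sum fun α r => r • x α‖ ∧
      ‖a.sum fun α r => r • x α‖ ≤ C * ((a.support.sup fun α => ‖a α‖₊) : ℝ≥0)

universe u v w x

/-! If `T ∈ J` is bounded below on a copy of `X`, its image `Y` is a closed copy of `X` on which
`T` has a bounded right inverse. Complementable homogeneity gives a complemented copy `W ⊆ Y`
of `X`; the projection onto `W` and the inverse of `T` on `W` then factor the identity of `X`
through `T`, so `I ∈ J` and `J = B(X)`. -/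

theorem PreservesCopy.exists_rightInverse {X : Type*} [NormedAddCommGroup X] [NormedSpace ℝ X]
    [CompleteSpace X] {Z : Type*} [NormedAddCommGroup Z] [NormedSpace ℝ Z] {T : X →L[ℝ] X}
    (hT : PreservesCopy Z T) :
    ∃ Y : Submodule ℝ X, IsClosed (Y : Set X) ∧ Nonempty (Y ≃L[ℝ] Z) ∧
      ∃ S : Y →L[ℝ] X, ∀ y : Y, T (S y) = y := by
  obtain ⟨W, hW, ⟨e⟩, γ, hγ, hbound⟩ := hT
  have : CompleteSpace W := hW.completeSpace_coe
  set T₀ : W →L[ℝ] X := T.comp W.subtypeL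
  have hT₀ : AntilipschitzWith (Real.toNNReal γ)⁻¹ T₀ :=
    T₀.antilipschitz_of_bound fun w => by
      rw [NNReal.coe_inv, Real.coe_toNNReal _ hγ.le, inv_mul_eq_div, le_div_iff₀ hγ, mul_comm]
      exact hbound w w.2
  have hclosed : IsClosed (Set.range T₀) := hT₀.isClosed_range T₀.uniformContinuous
  let e₀ := T₀.equivRange hT₀.injective hclosed
  refine ⟨LinearMap.range (T₀ : W →ₗ[ℝ] X), by rwa [LinearMap.coe_range], ⟨e₀.symm.trans e⟩,
    W.subtypeL.comp e₀.symm.toContinuousLinearMap, fun y => ?_⟩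
  exact congrArg Subtype.val (e₀.apply_symm_apply y)

theorem Submodule.closedComplemented_range_of_isIdempotentElem {R M : Type*} [Ring R]
    [TopologicalSpace M] [AddCommGroup M] [Module R M] {P : M →L[R] M}
    (hP : IsIdempotentElem P) : (LinearMap.range (P : M →ₗ[R] M)).ClosedComplemented :=
  ⟨P.codRestrict _ (LinearMap.mem_range_self _), fun ⟨_, y, hy⟩ =>
    Subtype.ext <| by simpa [← hy] using congr($hP y)⟩

theorem exists_comp_comp_eq_id_of_rightInverse {X : Type*} [NormedAddCommGroup X]
    [NormedSpace ℝ X] {T : X →L[ℝ] X} {Y W : Submodule ℝ X} (S : Y →L[ℝ] X)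
    (hS : ∀ y : Y, T (S y) = y) (hWY : W ≤ Y) (hW : W.ClosedComplemented) (ψ : W ≃L[ℝ] X) :
    ∃ A B : X →L[ℝ] X, A.comp (T.comp B) = ContinuousLinearMap.id ℝ X := by
  obtain ⟨q, hq⟩ := hW
  refine ⟨(ψ : W →L[ℝ] X).comp q,
    S.comp ((W.subtypeL.codRestrict Y fun w => hWY w.2).comp (ψ.symm : X →L[ℝ] W)), ?_⟩
  ext x
  simp [hS, hq]

theorem eq_univ_of_comp_comp_eq_id {R M : Type*} [Semiring R] [TopologicalSpace M]
    [AddCommMonoid M] [Module R M] {J : Set (M →L[R] M)}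
    (hJmul : ∀ T ∈ J, ∀ A : M →L[R] M, A.comp T ∈ J ∧ T.comp A ∈ J) {T A B : M →L[R] M}
    (hT : T ∈ J) (hAB : A.comp (T.comp B) = ContinuousLinearMap.id R M) : J = Set.univ := by
  have hid : ContinuousLinearMap.id R M ∈ J := hAB ▸ (hJmul _ (hJmul T hT B).2 A).1
  exact Set.eq_univ_of_forall fun S => by simpa using (hJmul _ hid S).1

theorem subset_SZ_of_complHomog_general {X : Type u} [NormedAddCommGroup X] [NormedSpace ℝ X]
    [CompleteSpace X]
    (hCH : ∀ Y : Submodule ℝ X, IsClosed (Y : Set X) → Nonempty (Y ≃L[ℝ] X) →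
      ∃ W : Submodule ℝ X, W ≤ Y ∧ Nonempty (W ≃L[ℝ] X) ∧
        ∃ P : X →L[ℝ] X, IsIdempotentElem P ∧ LinearMap.range (P : X →ₗ[ℝ] X) = W)
    (J : Set (X →L[ℝ] X))
    (hJmul : ∀ T ∈ J, ∀ A : X →L[ℝ] X, A.comp T ∈ J ∧ T.comp A ∈ J)
    (hJprop : J ≠ Set.univ) :
    J ⊆ SZ X X := by
  intro T hT hTcopy
  obtain ⟨Y, hY, hYX, S, hS⟩ := hTcopy.exists_rightInverse
  obtain ⟨W, hWY, ⟨ψ⟩, P, hP, rfl⟩ := hCH Y hY hYX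
  obtain ⟨A, B, hAB⟩ := exists_comp_comp_eq_id_of_rightInverse S hS hWY
    (Submodule.closedComplemented_range_of_isIdempotentElem hP) ψ
  exact hJprop (eq_univ_of_comp_comp_eq_id hJmul hT hAB)

/-- In a complementably homogeneous Banach space, every proper subset of
`B(X)` closed under two-sided multiplication is contained in `𝒮_X(X)`. -/
theorem subset_SZ_of_complHomog {X : Type u} [NormedAddCommGroup X] [NormedSpace ℝ X]
    [CompleteSpace X] (hinf : ¬ FiniteDimensional ℝ X)
    (hCH : ∀ Y : Submodule ℝ X, IsClosed (Y : Set X) → Nonempty (Y ≃L[ℝ] X) →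
      ∃ W : Submodule ℝ X, W ≤ Y ∧ Nonempty (W ≃L[ℝ] X) ∧
        ∃ P : X →L[ℝ] X, IsIdempotentElem P ∧ LinearMap.range (P : X →ₗ[ℝ] X) = W)
    (J : Set (X →L[ℝ] X))
    (hJmul : ∀ T ∈ J, ∀ A : X →L[ℝ] X, A.comp T ∈ J ∧ T.comp A ∈ J)
    (hJprop : J ≠ Set.univ) :
    J ⊆ SZ X X :=
  subset_SZ_of_complHomog_general hCH J hJmul hJprop
end
end

section
/- Let λ ≥ κ be uncountable cardinals and let p ∈ (1, ∞). Let (x_α)_{α<κ} be a normalised family in ℓ_p(λ) equivalent to the standard unit vector basis of ℓ_p(κ), and let T ∈ B(ℓ_p(λ)). If inf{‖T x_α‖ : α < κ} > 0, then T ∉ 𝒮_{ℓ_p(κ)}(ℓ_p(λ)); that is, there exist a closed subspace W of ℓ_p(λ) isomorphic to ℓ_p(κ) and γ > 0 such that ‖Tw‖ ≥ γ‖w‖ for all w ∈ W. -/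
noncomputable section

open scoped ENNReal NNReal

universe u v w x

/-!
Every column `α ↦ (T x_α)(γ)` is countably supported: if `|(T x_α)(γ)| ≥ ε` for `n` indices,
testing the coordinate functional on the signed sum of these `x_α` gives
`ε n ≤ ‖T‖ C n^{1/p}`, which bounds `n` because `p > 1`. The rows `T x_α` are countably
supported as well, so a maximal subfamily of the `T x_α` with pairwise disjoint supports has
cardinality `κ`. Disjointly supported vectors of norm at least `δ = inf ‖T x_α‖` satisfy a lower
`ℓ_p`-estimate with constant `δ`, while the `x_α` satisfy an upper one. Hence `e_α ↦ x_α` along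
this subfamily extends to an operator `Φ : ℓ_p(κ) → ℓ_p(λ)` with `‖T Φ b‖ ≥ δ ‖b‖`, and
`W = range Φ` is the required copy.
-/

open Filter Function Topology

theorem exists_nat_mul_rpow_lt {ε K q : ℝ} (hε : 0 < ε) (hq : 1 < q) :
    ∃ n : ℕ, K * (n : ℝ) ^ (1 / q) < ε * n := by
  have hexp : 0 < 1 - 1 / q := by
    rw [sub_pos, div_lt_one (by linarith)]; exact hq
  obtain ⟨n, hn, hn1⟩ := (((tendsto_rpow_atTop hexp).comp tendsto_natCast_atTop_atTop)
    |>.eventually_gt_atTop (K / ε) |>.and (eventually_ge_atTop 1)).exists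
  have hn0 : (0 : ℝ) < n := by exact_mod_cast hn1
  refine ⟨n, ?_⟩
  calc K * (n : ℝ) ^ (1 / q) < ε * (n : ℝ) ^ (1 - 1 / q) * (n : ℝ) ^ (1 / q) := by
        gcongr
        rwa [div_lt_iff₀' hε] at hn
    _ = ε * n := by rw [mul_assoc, ← Real.rpow_add hn0]; norm_num

theorem abs_sum_rpow_of_pairwise {ι : Type*} {s : Finset ι} {h : ι → ℝ} {q : ℝ} (hq : 0 < q)
    (hh : (s : Set ι).Pairwise fun α β => h α = 0 ∨ h β = 0) :
    |∑ α ∈ s, h α| ^ q = ∑ α ∈ s, |h α| ^ q := by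
  by_cases hex : ∃ α₀ ∈ s, h α₀ ≠ 0
  · obtain ⟨α₀, hα₀s, hα₀⟩ := hex
    have hzero : ∀ β ∈ s, β ≠ α₀ → h β = 0 := fun β hβ hne =>
      (hh hβ hα₀s hne).resolve_right hα₀
    rw [Finset.sum_eq_single_of_mem α₀ hα₀s hzero, Finset.sum_eq_single_of_mem α₀ hα₀s
      fun β hβ hne => by rw [hzero β hβ hne, abs_zero, Real.zero_rpow hq.ne']]
  · push Not at hex
    rw [Finset.sum_eq_zero hex, Finset.sum_eq_zero fun α hα => by
      rw [hex α hα, abs_zero, Real.zero_rpow hq.ne'], abs_zero, Real.zero_rpow hq.ne']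

theorem countable_support_of_finite_setOf_le_abs {ι : Type*} {g : ι → ℝ}
    (h : ∀ ε > 0, {α | ε ≤ |g α|}.Finite) : (support g).Countable := by
  refine (Set.countable_iUnion fun n : ℕ => (h (1 / (n + 1)) (by positivity)).countable).mono
    fun α hα => ?_
  obtain ⟨n, hn⟩ := exists_nat_one_div_lt (abs_pos.mpr hα)
  exact Set.mem_iUnion.mpr ⟨n, hn.le⟩

open Cardinal in
theorem exists_injective_pairwise_disjoint {κ L : Type*} (hκ : ℵ₀ < #κ) (S : κ → Set L)
    (hS : ∀ α, (S α).Countable) (hcol : ∀ x, {α | x ∈ S α}.Countable) :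
    ∃ j : κ → κ, Injective j ∧ Pairwise (Disjoint on fun α => S (j α)) := by
  obtain ⟨m, hm⟩ := zorn_subset {A : Set κ | A.PairwiseDisjoint S} fun c hc hchain =>
    ⟨⋃₀ c, (Set.pairwiseDisjoint_sUnion hchain.directedOn).mpr hc,
      fun _ => Set.subset_sUnion_of_mem⟩
  -- By maximality every index outside `m` meets some member of `m`, so `κ` is covered by `#m`
  -- countable sets.
  have hcover : (Set.univ : Set κ) ⊆ ⋃ β ∈ m, insert β (⋃ x ∈ S β, {α | x ∈ S α}) := by
    intro α _
    by_cases hαm : α ∈ m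
    · exact Set.mem_biUnion hαm (Set.mem_insert α _)
    · have hmd : m.PairwiseDisjoint S := hm.prop
      have hnot : ¬ ∀ β ∈ m, α ≠ β → Disjoint (S α) (S β) := fun h =>
        hαm (hm.mem_of_prop_insert (hmd.insert h))
      push Not at hnot
      obtain ⟨β, hβm, -, hαβ⟩ := hnot
      obtain ⟨x, hxα, hxβ⟩ := Set.not_disjoint_iff.mp hαβ
      exact Set.mem_biUnion hβm (Set.mem_insert_of_mem _ (Set.mem_biUnion hxβ hxα))
  have hκm : #κ ≤ max #m ℵ₀ := calc
    #κ ≤ #m * ℵ₀ := by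
      refine (mk_univ.symm.le.trans (mk_le_mk_of_subset hcover)).trans
        ((mk_biUnion_le _ m).trans (mul_le_mul_right (ciSup_le' fun β => ?_) _))
      exact le_aleph0_iff_set_countable.mpr (((hS β).biUnion fun x _ => hcol x).insert _)
    _ ≤ max #m ℵ₀ := by simpa using mul_le_max #m ℵ₀
  obtain ⟨e⟩ := (le_def κ m).mp ((le_max_iff.mp hκm).resolve_right hκ.not_ge)
  exact ⟨fun α => e α, Subtype.val_injective.comp e.injective,
    fun α β hne => hm.prop (e α).2 (e β).2 fun h => hne (e.injective (Subtype.val_injective h))⟩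

namespace lp

variable {ι κ : Type*} {p : ℝ≥0∞}

theorem countable_support (hp : 0 < p.toReal) (f : ellp ι p) : (support f).Countable :=
  (hasSum_norm hp f).summable.countable_support.mono fun _ hγ =>
    (Real.rpow_pos_of_pos (norm_pos_iff.mpr hγ) _).ne'

theorem norm_sum_smul_rpow_of_pairwise_disjoint (hp : 0 < p.toReal) {w : κ → ellp ι p}
    (hw : Pairwise (Disjoint on fun α => support (w α))) (s : Finset κ) (b : κ → ℝ) :
    ‖∑ α ∈ s, b α • w α‖ ^ p.toReal = ∑ α ∈ s, |b α| ^ p.toReal * ‖w α‖ ^ p.toReal := by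
  have hpoint : ∀ γ, ‖(∑ α ∈ s, b α • w α) γ‖ ^ p.toReal =
      ∑ α ∈ s, |b α| ^ p.toReal * ‖w α γ‖ ^ p.toReal := fun γ => by
    have hdisj : (s : Set κ).Pairwise fun α β => b α * w α γ = 0 ∨ b β * w β γ = 0 :=
      fun α _ β _ hne => by
        by_contra! h
        exact Set.disjoint_left.mp (hw hne) (right_ne_zero_of_mul h.1) (right_ne_zero_of_mul h.2)
    simp only [coeFn_sum, coeFn_smul, Finset.sum_apply, Pi.smul_apply, smul_eq_mul,
      Real.norm_eq_abs, abs_sum_rpow_of_pairwise hp hdisj, abs_mul,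
      Real.mul_rpow (abs_nonneg _) (abs_nonneg _)]
  rw [norm_rpow_eq_tsum hp, tsum_congr hpoint, Summable.tsum_finsetSum fun α _ =>
    (hasSum_norm hp (w α)).summable.mul_left _]
  exact Finset.sum_congr rfl fun α _ => by rw [tsum_mul_left, ← norm_rpow_eq_tsum hp]

theorem tendsto_sum_rpow_rpow_norm (hp : 0 < p.toReal) (b : ellp ι p) :
    Tendsto (fun s : Finset ι => (∑ α ∈ s, |b α| ^ p.toReal) ^ (1 / p.toReal)) atTop
      (𝓝 ‖b‖) := by
  have h : HasSum (fun α => |b α| ^ p.toReal) (‖b‖ ^ p.toReal) := by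
    simpa only [Real.norm_eq_abs] using hasSum_norm hp b
  have hlim :=
    (Real.continuousAt_rpow_const _ (1 / p.toReal) (Or.inr (by positivity))).tendsto.comp h
  rwa [one_div, Real.rpow_rpow_inv (norm_nonneg' b) hp.ne', ← one_div] at hlim

end lp

section Estimates

variable {ι E : Type*} [NormedAddCommGroup E] [NormedSpace ℝ E] {q C : ℝ} {u : ι → E}

def HasUpperEstimate (q C : ℝ) (u : ι → E) : Prop :=
  ∀ (s : Finset ι) (b : ι → ℝ), ‖∑ α ∈ s, b α • u α‖ ≤ C * (∑ α ∈ s, |b α| ^ q) ^ (1 / q)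

def HasLowerEstimate (q c : ℝ) (u : ι → E) : Prop :=
  ∀ (s : Finset ι) (b : ι → ℝ), c * (∑ α ∈ s, |b α| ^ q) ^ (1 / q) ≤ ‖∑ α ∈ s, b α • u α‖

theorem IsLpBasisEquiv.exists_hasUpperEstimate (hu : IsLpBasisEquiv u q) (hq : 0 < q) :
    ∃ C, 0 ≤ C ∧ HasUpperEstimate q C u := by
  classical
  obtain ⟨_, C, _, hC, hbound⟩ := hu
  refine ⟨C, hC.le, fun s b => ?_⟩
  set a : ι →₀ ℝ := Finsupp.indicator s fun α _ => b α
  have hsupp : a.support ⊆ s := Finsupp.support_indicator_subset _ _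
  have ha : ∀ α ∈ s, a α = b α := fun α hα => by simp [a, Finsupp.indicator_of_mem hα]
  have h := (hbound a).2
  rwa [Finsupp.sum_of_support_subset _ hsupp (fun α r => r • u α) fun _ _ => zero_smul ℝ _,
    Finset.sum_subset hsupp fun α _ hα => by
      rw [Finsupp.notMem_support_iff.mp hα, abs_zero, Real.zero_rpow hq.ne'],
    Finset.sum_congr rfl fun α hα => (by rw [ha α hα] : a α • u α = b α • u α),
    Finset.sum_congr rfl fun α hα => (by rw [ha α hα] : |a α| ^ q = |b α| ^ q)] at h

theorem HasUpperEstimate.comp_injective {κ : Type*} (hu : HasUpperEstimate q C u) {j : κ → ι}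
    (hj : Injective j) : HasUpperEstimate q C (u ∘ j) := fun s b => by
  simpa [Finset.sum_map, hj.extend_apply] using hu (s.map ⟨j, hj⟩) (extend j b 0)

theorem HasUpperEstimate.finite_setOf_le_abs (hu : HasUpperEstimate q C u) (hq : 1 < q)
    (hC : 0 ≤ C) (f : E →L[ℝ] ℝ) {ε : ℝ} (hε : 0 < ε) : {α | ε ≤ |f (u α)|}.Finite := by
  by_contra hinf
  obtain ⟨n, hn⟩ := exists_nat_mul_rpow_lt (K := ‖f‖ * C) hε hq
  obtain ⟨t, hts, rfl⟩ := Set.Infinite.exists_subset_card_eq hinf n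
  refine hn.not_ge ?_
  set b : ι → ℝ := fun α => SignType.sign (f (u α))
  have hsign : ∀ r : ℝ, |(SignType.sign r : ℝ)| ≤ 1 := fun r => by cases SignType.sign r <;> simp
  calc ε * t.card = ∑ _α ∈ t, ε := by simp [mul_comm]
    _ ≤ ∑ α ∈ t, |f (u α)| := Finset.sum_le_sum fun α hα => hts hα
    _ = f (∑ α ∈ t, b α • u α) := by simp [b, map_sum, sign_mul_self]
    _ ≤ ‖f‖ * ‖∑ α ∈ t, b α • u α‖ := (le_abs_self _).trans (f.le_opNorm _)
    _ ≤ ‖f‖ * (C * (∑ α ∈ t, |b α| ^ q) ^ (1 / q)) := by gcongr; exact hu t b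
    _ ≤ ‖f‖ * C * (t.card : ℝ) ^ (1 / q) := by
        rw [← mul_assoc]
        gcongr
        calc ∑ α ∈ t, |b α| ^ q ≤ ∑ _α ∈ t, (1 : ℝ) := Finset.sum_le_sum fun α _ =>
              Real.rpow_le_one (abs_nonneg _) (hsign _) (by linarith)
          _ = t.card := by simp

end Estimates

theorem hasLowerEstimate_of_pairwise_disjoint {ι κ : Type*} {p : ℝ≥0∞} [Fact (1 ≤ p)]
    (hp : 0 < p.toReal) {w : κ → ellp ι p} (hw : Pairwise (Disjoint on fun α => support (w α)))
    {δ : ℝ} (hδ : 0 ≤ δ) (hwδ : ∀ α, δ ≤ ‖w α‖) : HasLowerEstimate p.toReal δ w := fun s b => by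
  have hS : 0 ≤ ∑ α ∈ s, |b α| ^ p.toReal := by positivity
  rw [← Real.rpow_le_rpow_iff (by positivity) (lp.norm_nonneg' _) hp,
    lp.norm_sum_smul_rpow_of_pairwise_disjoint hp hw, Real.mul_rpow hδ (by positivity),
    ← Real.rpow_mul hS, one_div_mul_cancel hp.ne', Real.rpow_one, Finset.mul_sum]
  exact Finset.sum_le_sum fun α _ => by
    rw [mul_comm]; gcongr; exact hwδ α

section Synthesis

variable {ι E : Type*} [NormedAddCommGroup E] [NormedSpace ℝ E] {p : ℝ≥0∞} {C : ℝ}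
  {u : ι → E}

theorem HasUpperEstimate.norm_le_of_hasSum (hu : HasUpperEstimate p.toReal C u)
    (hp : 0 < p.toReal) {b : ellp ι p} {z : E} (hz : HasSum (fun α => b α • u α) z) :
    ‖z‖ ≤ C * ‖b‖ :=
  le_of_tendsto_of_tendsto' hz.norm ((lp.tendsto_sum_rpow_rpow_norm hp b).const_mul C)
    fun s => hu s b

theorem HasLowerEstimate.le_norm_of_hasSum (hu : HasLowerEstimate p.toReal C u)
    (hp : 0 < p.toReal) {b : ellp ι p} {z : E} (hz : HasSum (fun α => b α • u α) z) :
    C * ‖b‖ ≤ ‖z‖ :=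
  le_of_tendsto_of_tendsto' ((lp.tendsto_sum_rpow_rpow_norm hp b).const_mul C) hz.norm
    fun s => hu s b

theorem HasUpperEstimate.summable [CompleteSpace E] (hu : HasUpperEstimate p.toReal C u)
    (hC : 0 ≤ C) (hp : 0 < p.toReal) (b : ellp ι p) : Summable fun α => b α • u α := by
  have hb : Summable fun α => |b α| ^ p.toReal := by
    simpa only [Real.norm_eq_abs] using (lp.hasSum_norm hp b).summable
  refine summable_iff_vanishing_norm.mpr fun ε hε => ?_
  obtain ⟨s, hs⟩ := summable_iff_vanishing_norm.mp hb ((ε / (C + 1)) ^ p.toReal) (by positivity)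
  refine ⟨s, fun t ht => ?_⟩
  have htail : (∑ α ∈ t, |b α| ^ p.toReal) ^ (1 / p.toReal) < ε / (C + 1) := by
    have h := hs t ht
    rw [Real.norm_of_nonneg (by positivity)] at h
    calc (∑ α ∈ t, |b α| ^ p.toReal) ^ (1 / p.toReal)
        < ((ε / (C + 1)) ^ p.toReal) ^ (1 / p.toReal) := by gcongr
      _ = ε / (C + 1) := by rw [one_div, Real.rpow_rpow_inv (by positivity) hp.ne']
  calc ‖∑ α ∈ t, b α • u α‖ ≤ C * (∑ α ∈ t, |b α| ^ p.toReal) ^ (1 / p.toReal) := hu t b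
    _ ≤ C * (ε / (C + 1)) := by gcongr
    _ < ε := by
      rw [mul_div_assoc', div_lt_iff₀ (by positivity)]
      nlinarith

theorem HasUpperEstimate.exists_hasSum [CompleteSpace E] [Fact (1 ≤ p)]
    (hu : HasUpperEstimate p.toReal C u) (hC : 0 ≤ C) (hp : 0 < p.toReal) :
    ∃ Φ : ellp ι p →L[ℝ] E, ∀ b, HasSum (fun α => b α • u α) (Φ b) := by
  have hsum := hu.summable hC hp
  let Φ : ellp ι p →ₗ[ℝ] E :=
    { toFun := fun b => ∑' α, b α • u α
      map_add' := fun b b' => by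
        simpa only [lp.coeFn_add, Pi.add_apply, add_smul] using
          ((hsum b).hasSum.add (hsum b').hasSum).tsum_eq
      map_smul' := fun r b => by
        simpa only [lp.coeFn_smul, Pi.smul_apply, smul_eq_mul, mul_smul, RingHom.id_apply] using
          ((hsum b).hasSum.const_smul r).tsum_eq }
  exact ⟨Φ.mkContinuous C fun b => hu.norm_le_of_hasSum hp (hsum b).hasSum,
    fun b => (hsum b).hasSum⟩

end Synthesis

theorem PreservesCopy.of_le_norm_comp {X Z : Type*} [NormedAddCommGroup X] [NormedSpace ℝ X]
    [CompleteSpace X] [NormedAddCommGroup Z] [NormedSpace ℝ Z] [CompleteSpace Z]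
    (T : X →L[ℝ] X) (Φ : Z →L[ℝ] X) {δ : ℝ} (hδ : 0 < δ) (h : ∀ z, δ * ‖z‖ ≤ ‖T (Φ z)‖) :
    PreservesCopy Z T := by
  have hanti : AntilipschitzWith ⟨‖T‖ / δ, by positivity⟩ Φ :=
    Φ.antilipschitz_of_bound fun z => by
      show ‖z‖ ≤ ‖T‖ / δ * ‖Φ z‖
      rw [div_mul_eq_mul_div, le_div_iff₀ hδ, mul_comm]
      exact (h z).trans (T.le_opNorm _)
  have hclosed : IsClosed (Set.range Φ) := hanti.isClosed_range Φ.uniformContinuous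
  refine ⟨Φ.range, by rwa [LinearMap.coe_range],
    ⟨(Φ.equivRange hanti.injective hclosed).symm⟩, δ / (‖Φ‖ + 1), by positivity, ?_⟩
  rintro _ ⟨z, rfl⟩
  calc δ / (‖Φ‖ + 1) * ‖Φ z‖ ≤ δ / (‖Φ‖ + 1) * ((‖Φ‖ + 1) * ‖z‖) := by
        gcongr
        exact (Φ.le_opNorm z).trans (by gcongr; linarith)
    _ = δ * ‖z‖ := by field_simp
    _ ≤ ‖T (Φ z)‖ := h z

theorem preservesCopy_of_inf_pos_general {ιl ικ : Type u}
    (hκ : Cardinal.aleph0 < Cardinal.mk ικ)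
    (p : ℝ≥0∞) [Fact (1 ≤ p)] (hp1 : 1 < p) (hp2 : p ≠ ∞)
    (xv : ικ → ellp ιl p) (hx : IsLpBasisEquiv xv p.toReal)
    (T : ellp ιl p →L[ℝ] ellp ιl p) (hinf : 0 < ⨅ α : ικ, ‖T (xv α)‖) :
    PreservesCopy (ellp ικ p) T := by
  have hq : 1 < p.toReal := by simpa using ENNReal.toReal_strict_mono hp2 hp1
  have hp : 0 < p.toReal := zero_lt_one.trans hq
  obtain ⟨C, hC, hxC⟩ := hx.exists_hasUpperEstimate hp
  obtain ⟨j, hj, hdisj⟩ := exists_injective_pairwise_disjoint hκ (fun α => support (T (xv α)))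
    (fun α => lp.countable_support hp _)
    (fun γ => countable_support_of_finite_setOf_le_abs fun ε hε =>
      hxC.finite_setOf_le_abs hq hC ((lp.evalCLM ℝ _ p γ).comp T) hε)
  obtain ⟨Φ, hΦ⟩ := (hxC.comp_injective hj).exists_hasSum hC hp
  have hlower : HasLowerEstimate p.toReal (⨅ α, ‖T (xv α)‖) fun α => T (xv (j α)) :=
    hasLowerEstimate_of_pairwise_disjoint hp hdisj hinf.le fun α =>
      ciInf_le ⟨0, Set.forall_mem_range.mpr fun _ => norm_nonneg _⟩ (j α)
  refine PreservesCopy.of_le_norm_comp T Φ hinf fun b => hlower.le_norm_of_hasSum hp ?_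
  simpa only [map_smul, comp_apply] using T.hasSum (hΦ b)

/-- (Rosenthal-type result for `ℓ_p(λ)`, `1 < p < ∞`.) -/
theorem preservesCopy_of_inf_pos {ιl ικ : Type u}
    (hle : Cardinal.mk ικ ≤ Cardinal.mk ιl)
    (hκ : Cardinal.aleph0 < Cardinal.mk ικ) (hlam : Cardinal.aleph0 < Cardinal.mk ιl)
    (p : ℝ≥0∞) [Fact (1 ≤ p)] (hp1 : 1 < p) (hp2 : p ≠ ∞)
    (xv : ικ → ellp ιl p) (hnorm : ∀ α, ‖xv α‖ = 1) (hx : IsLpBasisEquiv xv p.toReal)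
    (T : ellp ιl p →L[ℝ] ellp ιl p) (hinf : 0 < ⨅ α : ικ, ‖T (xv α)‖) :
    PreservesCopy (ellp ικ p) T :=
  preservesCopy_of_inf_pos_general hκ p hp1 hp2 xv hx T hinf
end
end

section
/- Let X be a Banach space and suppose W is a non-zero complemented subspace of X such that W has the SHAI property. Let Y be a non-zero Banach space and let ψ : B(X) → B(Y) be a surjective algebra homomorphism that is not injective. Then Ḡ_W(X) ⊆ Ker(ψ), i.e. ψ vanishes on every operator in the closed linear span of the operators on X that factor through W. -/
noncomputable section

open scoped ENNReal NNReal

universe u v w x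

/-!
Write the projection onto `W` as `P = ι r` with `r ι = 1`. Compression by `P` identifies `B(W)`
with the corner `P B(X) P`, which `ψ` maps onto the corner of `B(Y)` cut out by the idempotent
`e = ψ P`, i.e. onto `B(e Y)`. If `e ≠ 0` this gives a surjective homomorphism `B(W) → B(e Y)`,
injective by the SHAI property. But for `0 ≠ g ∈ ker ψ` there are `u`, `v` with `u g v ≠ 0` in
`B(W)`, and its image `ψ (ι u) ψ g ψ (v r)` vanishes. Hence `ψ P = 0`, so `ψ` kills every
`S T = (S r) P (ι T)`.

The kernel of a surjection `ψ` of a Banach algebra onto `B(Y)` is closed: if `g` is a limit of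
elements of the kernel and `ψ g y ≠ 0`, pick `a` with `ψ a` a rank-one operator sending `ψ g y` to
`y`, and `k ∈ ker ψ` with `‖a g - k‖ < 1`. Then `1 - (a g - k)` is invertible, while its image
`1 - ψ a ψ g` kills `y`.
-/

open Function

section KernelClosed

variable {A 𝕜 Y : Type*} [NormedRing A] [CompleteSpace A] [NontriviallyNormedField 𝕜]
  [NormedAddCommGroup Y] [NormedSpace 𝕜 Y]

theorem ContinuousLinearMap.not_isUnit_one_sub_smulRight_mul {f : StrongDual 𝕜 Y} {y : Y}
    {T : Y →L[𝕜] Y} (hT : f (T y) = 1) : ¬IsUnit (1 - f.smulRight y * T) := by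
  rintro ⟨u, hu⟩
  have hy : y ≠ 0 := by rintro rfl; simp at hT
  have hker : (1 - f.smulRight y * T) y = 0 := by simp [hT]
  have := congr(($(u.inv_mul) : Y →L[𝕜] Y) y)
  exact hy (by simpa [hu, hker] using this.symm)

theorem RingHom.isClosed_ker_of_surjective [SeparatingDual 𝕜 Y] (ψ : A →+* (Y →L[𝕜] Y))
    (hψ : Surjective ψ) : IsClosed (RingHom.ker ψ : Set A) := by
  refine closure_subset_iff_isClosed.mp fun g hg => ?_
  by_contra hg0
  obtain ⟨y, hy⟩ := DFunLike.ne_iff.mp hg0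
  obtain ⟨f, hf⟩ := SeparatingDual.exists_eq_one (R := 𝕜) hy
  obtain ⟨a, ha⟩ := hψ (f.smulRight y)
  have hag : a * g ∈ closure (RingHom.ker ψ : Set A) :=
    map_mem_closure (continuous_const_mul a) hg fun k hk => Ideal.mul_mem_left _ a hk
  obtain ⟨k, hk, hdist⟩ := Metric.mem_closure_iff.mp hag 1 one_pos
  have hunit : IsUnit (1 - (a * g - k)) :=
    isUnit_one_sub_of_norm_lt_one (by rwa [← dist_eq_norm])
  have := hunit.map ψ
  rw [map_sub, map_one, map_sub, map_mul, ha, RingHom.mem_ker.mp hk, sub_zero] at this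
  exact ContinuousLinearMap.not_isUnit_one_sub_smulRight_mul hf this

end KernelClosed

section Corner

variable {𝕜 X E Y : Type*} [NontriviallyNormedField 𝕜]
  [NormedAddCommGroup X] [NormedSpace 𝕜 X] [NormedAddCommGroup E] [NormedSpace 𝕜 E]
  [NormedAddCommGroup Y] [NormedSpace 𝕜 Y]

namespace ContinuousLinearMap

def cornerEmbedding (ι : E →L[𝕜] X) (r : X →L[𝕜] E) (hr : r ∘L ι = .id 𝕜 E) :
    (E →L[𝕜] E) →ₙₐ[𝕜] (X →L[𝕜] X) where
  toFun A := ι ∘L A ∘L r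
  map_smul' c A := by simp
  map_zero' := by simp
  map_add' A B := by simp [add_comp, comp_add]
  map_mul' A B := by
    ext x
    simp [← comp_apply r ι, hr]

end ContinuousLinearMap

namespace NonUnitalAlgHom

variable {B : Type*} [Ring B] [Algebra 𝕜 B]

theorem map_one_mul (φ : B →ₙₐ[𝕜] (Y →L[𝕜] Y)) (a : B) : φ 1 * φ a = φ a := by
  rw [← map_mul, one_mul]

theorem map_one_apply_coe (φ : B →ₙₐ[𝕜] (Y →L[𝕜] Y)) (z : (φ 1).range) : φ 1 z = z := by
  obtain ⟨_, y, rfl⟩ := z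
  exact congr($(map_one_mul φ 1) y)

def restrictRangeOne (φ : B →ₙₐ[𝕜] (Y →L[𝕜] Y)) :
    B →ₐ[𝕜] ((φ 1).range →L[𝕜] (φ 1).range) :=
  AlgHom.ofLinearMap
    { toFun a := (φ a).restrict fun y _ => ⟨φ a y, congr($(map_one_mul φ a) y)⟩
      map_add' a b := by ext z; exact congr($(map_add φ a b) z)
      map_smul' c a := by ext z; exact congr($(map_smul φ c a) z) }
    (by ext z; exact map_one_apply_coe φ z)
    (fun a b => by ext z; exact congr($(map_mul φ a b) z))

@[simp]
theorem restrictRangeOne_apply_coe (φ : B →ₙₐ[𝕜] (Y →L[𝕜] Y)) (a : B) (z : (φ 1).range) :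
    (φ.restrictRangeOne a z : Y) = φ a z := rfl

end NonUnitalAlgHom

open ContinuousLinearMap

theorem AlgHom.surjective_restrictRangeOne_comp_cornerEmbedding
    (ψ : (X →L[𝕜] X) →ₐ[𝕜] (Y →L[𝕜] Y)) (hψ : Surjective ψ)
    (ι : E →L[𝕜] X) (r : X →L[𝕜] E) (hr : r ∘L ι = .id 𝕜 E) :
    Surjective (ψ.toNonUnitalAlgHom.comp (cornerEmbedding ι r hr)).restrictRangeOne := by
  set φ := ψ.toNonUnitalAlgHom.comp (cornerEmbedding ι r hr)
  intro T
  obtain ⟨g, hg⟩ := hψ ((φ 1).range.subtypeL ∘L T ∘L (φ 1).rangeRestrict)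
  have hφ : φ (r ∘L g ∘L ι) = φ 1 * ψ g * φ 1 := by
    change ψ _ = ψ _ * ψ g * ψ _
    rw [← map_mul, ← map_mul]
    rfl
  refine ⟨r ∘L g ∘L ι, ?_⟩
  ext z
  have hz : (φ 1).rangeRestrict z = z := Subtype.ext (φ.map_one_apply_coe z)
  rw [NonUnitalAlgHom.restrictRangeOne_apply_coe, hφ, mul_apply_eq_comp, mul_apply_eq_comp,
    φ.map_one_apply_coe, hg, ContinuousLinearMap.comp_apply, ContinuousLinearMap.comp_apply, hz,
    Submodule.subtypeL_apply, φ.map_one_apply_coe]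

end Corner

namespace ContinuousLinearMap

variable {𝕜 X X' E : Type*} [NontriviallyNormedField 𝕜]
  [NormedAddCommGroup X] [NormedSpace 𝕜 X] [NormedAddCommGroup X'] [NormedSpace 𝕜 X']
  [NormedAddCommGroup E] [NormedSpace 𝕜 E]

theorem exists_comp_comp_ne_zero [SeparatingDual 𝕜 X'] [SeparatingDual 𝕜 E] [Nontrivial E]
    {g : X →L[𝕜] X'} (hg : g ≠ 0) : ∃ (u : X' →L[𝕜] E) (v : E →L[𝕜] X), u ∘L g ∘L v ≠ 0 := by
  obtain ⟨x, hx⟩ := DFunLike.ne_iff.mp hg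
  obtain ⟨f, hf⟩ := SeparatingDual.exists_eq_one (R := 𝕜) hx
  obtain ⟨w, hw⟩ := exists_ne (0 : E)
  obtain ⟨h, hh⟩ := SeparatingDual.exists_eq_one (R := 𝕜) hw
  refine ⟨f.smulRight w, h.smulRight x, DFunLike.ne_iff.mpr ⟨w, ?_⟩⟩
  simpa [hh, hf] using hw

end ContinuousLinearMap

def HasSHAIProperty (𝕜 : Type*) [NontriviallyNormedField 𝕜]
    (E : Type*) [NormedAddCommGroup E] [NormedSpace 𝕜 E] : Prop :=
  ∀ (Z : Type v) [NormedAddCommGroup Z] [NormedSpace 𝕜 Z] [CompleteSpace Z] [Nontrivial Z]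
    (θ : (E →L[𝕜] E) →ₐ[𝕜] (Z →L[𝕜] Z)), Surjective θ → Injective θ

section SHAI

open ContinuousLinearMap

variable {𝕜 X E : Type*} {Y : Type v} [NontriviallyNormedField 𝕜]
  [NormedAddCommGroup X] [NormedSpace 𝕜 X] [SeparatingDual 𝕜 X]
  [NormedAddCommGroup E] [NormedSpace 𝕜 E] [SeparatingDual 𝕜 E] [Nontrivial E]
  [NormedAddCommGroup Y] [NormedSpace 𝕜 Y] [CompleteSpace Y]

theorem AlgHom.map_projection_eq_zero_of_hasSHAIProperty (hE : HasSHAIProperty.{v} 𝕜 E)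
    (ψ : (X →L[𝕜] X) →ₐ[𝕜] (Y →L[𝕜] Y)) (hsurj : Surjective ψ) (hninj : ¬Injective ψ)
    {ι : E →L[𝕜] X} {r : X →L[𝕜] E} (hr : r ∘L ι = .id 𝕜 E) : ψ (ι ∘L r) = 0 := by
  set φ := ψ.toNonUnitalAlgHom.comp (cornerEmbedding ι r hr)
  by_contra he
  have : Nontrivial (φ 1).range := by
    refine Submodule.nontrivial_iff_ne_bot.mpr fun h => he ?_
    exact coe_injective (LinearMap.range_eq_bot.mp h)
  have : CompleteSpace (φ 1).range :=
    (IsIdempotentElem.one.map φ).isClosed_range.completeSpace_coe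
  have hθ := hE _ _ (ψ.surjective_restrictRangeOne_comp_cornerEmbedding hsurj ι r hr)
  obtain ⟨g, hg, hg0⟩ : ∃ g, ψ g = 0 ∧ g ≠ 0 := by
    simpa [injective_iff_map_eq_zero] using hninj
  obtain ⟨u, v, huv⟩ := exists_comp_comp_ne_zero (E := E) hg0
  refine huv (hθ ?_)
  have : φ (u ∘L g ∘L v) = ψ (ι ∘L u) * ψ g * ψ (v ∘L r) := by
    change ψ _ = _
    rw [← map_mul, ← map_mul]
    rfl
  rw [map_zero]
  ext z
  change φ _ z = 0
  simp [this, hg]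

theorem AlgHom.map_comp_eq_zero_of_hasSHAIProperty (hE : HasSHAIProperty.{v} 𝕜 E)
    (ψ : (X →L[𝕜] X) →ₐ[𝕜] (Y →L[𝕜] Y)) (hsurj : Surjective ψ) (hninj : ¬Injective ψ)
    {ι : E →L[𝕜] X} {r : X →L[𝕜] E} (hr : r ∘L ι = .id 𝕜 E) (S : E →L[𝕜] X) (T : X →L[𝕜] E) :
    ψ (S ∘L T) = 0 := by
  have : S ∘L T = (S ∘L r) * (ι ∘L r) * (ι ∘L T) := by
    ext x
    simp [mul_apply_eq_comp, ← ContinuousLinearMap.comp_apply r ι, hr]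
  rw [this, map_mul, map_mul, ψ.map_projection_eq_zero_of_hasSHAIProperty hE hsurj hninj hr,
    mul_zero, zero_mul]

end SHAI

theorem approxFactor_subset_ker_general {X : Type u} [NormedAddCommGroup X] [NormedSpace ℝ X]
    [CompleteSpace X] (W : Submodule ℝ X) (hW : W ≠ ⊥)
    (hWcompl : ∃ P : X →L[ℝ] X, IsIdempotentElem P ∧ LinearMap.range (P : X →ₗ[ℝ] X) = W)
    (hSHAI : ∀ (Z : Type v) [NormedAddCommGroup Z] [NormedSpace ℝ Z] [CompleteSpace Z]
      [Nontrivial Z] (θ : (W →L[ℝ] W) →ₐ[ℝ] (Z →L[ℝ] Z)),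
        Function.Surjective θ → Function.Injective θ)
    (Y : Type v) [NormedAddCommGroup Y] [NormedSpace ℝ Y] [CompleteSpace Y]
    (ψ : (X →L[ℝ] X) →ₐ[ℝ] (Y →L[ℝ] Y)) (hsurj : Function.Surjective ψ)
    (hninj : ¬ Function.Injective ψ) :
    ∀ g ∈ closure ((Submodule.span ℝ {g : X →L[ℝ] X |
        ∃ (T : X →L[ℝ] W) (S : (W : Type u) →L[ℝ] X), g = S.comp T} :
          Submodule ℝ (X →L[ℝ] X)) : Set (X →L[ℝ] X)),
      ψ g = 0 := by
  obtain ⟨P, hP, hPW⟩ := hWcompl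
  obtain ⟨r, hr⟩ : W.ClosedComplemented :=
    hPW ▸ (ContinuousLinearMap.IsIdempotentElem.isTopCompl hP).closedComplemented
  have : Nontrivial W := Submodule.nontrivial_iff_ne_bot.mpr hW
  have hspan : Submodule.span ℝ {g : X →L[ℝ] X |
      ∃ (T : X →L[ℝ] W) (S : (W : Type u) →L[ℝ] X), g = S.comp T} ≤
        LinearMap.ker ψ.toLinearMap := by
    refine Submodule.span_le.mpr ?_
    rintro _ ⟨T, S, rfl⟩
    exact ψ.map_comp_eq_zero_of_hasSHAIProperty hSHAI hsurj hninj
      (ι := W.subtypeL) (ContinuousLinearMap.ext hr) S T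
  exact fun g hg => closure_minimal hspan (ψ.toRingHom.isClosed_ker_of_surjective hsurj) hg

/-- If `W` is a non-zero complemented subspace of `X` with the SHAI
property, then every surjective non-injective algebra homomorphism `B(X) → B(Y)`
vanishes on the ideal of operators approximately factoring through `W`. -/
theorem approxFactor_subset_ker {X : Type u} [NormedAddCommGroup X] [NormedSpace ℝ X]
    [CompleteSpace X] (W : Submodule ℝ X) (hW : W ≠ ⊥)
    (hWcompl : ∃ P : X →L[ℝ] X, IsIdempotentElem P ∧ LinearMap.range (P : X →ₗ[ℝ] X) = W)
    (hSHAI : ∀ (Z : Type v) [NormedAddCommGroup Z] [NormedSpace ℝ Z] [CompleteSpace Z]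
      [Nontrivial Z] (θ : (W →L[ℝ] W) →ₐ[ℝ] (Z →L[ℝ] Z)),
        Function.Surjective θ → Function.Injective θ)
    (Y : Type v) [NormedAddCommGroup Y] [NormedSpace ℝ Y] [CompleteSpace Y] [Nontrivial Y]
    (ψ : (X →L[ℝ] X) →ₐ[ℝ] (Y →L[ℝ] Y)) (hsurj : Function.Surjective ψ)
    (hninj : ¬ Function.Injective ψ) :
    ∀ g ∈ closure ((Submodule.span ℝ {g : X →L[ℝ] X |
        ∃ (T : X →L[ℝ] W) (S : (W : Type u) →L[ℝ] X), g = S.comp T} :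
          Submodule ℝ (X →L[ℝ] X)) : Set (X →L[ℝ] X)),
      ψ g = 0 :=
  approxFactor_subset_ker_general W hW hWcompl hSHAI Y ψ hsurj hninj
end
end
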